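/- arXiv:1112.0857 — 4 statements merged into one kernel-verified Lean document; each statement's English description precedes it below -/
import Mathlib

section
/- Let G = ⟨N, E, l⟩ be a finite labeled directed acyclic graph, let V be any type of hash values, let H be any function mapping a pair (label, finite set of hash values) to a hash value, and let h : N → V be the function defined by well-founded recursion on the child relation by h(n) = H(l(n), { h(c) : c ∈ children(n) }). Then bisimilar nodes receive the same hash value: for all nodes n₁, n₂ ∈ N, n₁ ≈ n₂ implies h(n₁) = h(n₂). -/
/-- A labeled directed graph: a directed edge relation and a node labeling. -/
structure LGraph (V : Type*) (L : Type*) where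
  edge : V → V → Prop
  label : V → L

/-- `R` is a bisimulation between `G₁` and `G₂`. -/
def IsBisim {V₁ V₂ L : Type*} (G₁ : LGraph V₁ L) (G₂ : LGraph V₂ L)
    (R : V₁ → V₂ → Prop) : Prop :=
  ∀ n₁ n₂, R n₁ n₂ →
    G₁.label n₁ = G₂.label n₂ ∧
    (∀ c₁, G₁.edge n₁ c₁ → ∃ c₂, G₂.edge n₂ c₂ ∧ R c₁ c₂) ∧
    (∀ c₂, G₂.edge n₂ c₂ → ∃ c₁, G₁.edge n₁ c₁ ∧ R c₁ c₂)

/-- Nodes are bisimilar iff some bisimulation relates them. -/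
def Bisimilar {V₁ V₂ L : Type*} (G₁ : LGraph V₁ L) (G₂ : LGraph V₂ L)
    (n₁ : V₁) (n₂ : V₂) : Prop :=
  ∃ R, IsBisim G₁ G₂ R ∧ R n₁ n₂

namespace IsBisim

variable {V₁ V₂ L Vh : Type*} {G₁ : LGraph V₁ L} {G₂ : LGraph V₂ L} {R : V₁ → V₂ → Prop}

theorem image_children_eq (hR : IsBisim G₁ G₂ R) {n₁ : V₁} {n₂ : V₂} (hn : R n₁ n₂)
    {h₁ : V₁ → Vh} {h₂ : V₂ → Vh}
    (hchild : ∀ c₁, G₁.edge n₁ c₁ → ∀ c₂, R c₁ c₂ → h₁ c₁ = h₂ c₂) :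
    h₁ '' {c | G₁.edge n₁ c} = h₂ '' {c | G₂.edge n₂ c} := by
  obtain ⟨-, hforth, hback⟩ := hR n₁ n₂ hn
  ext v
  constructor
  · rintro ⟨c₁, hc₁, rfl⟩
    obtain ⟨c₂, hc₂, hc⟩ := hforth c₁ hc₁
    exact ⟨c₂, hc₂, (hchild c₁ hc₁ c₂ hc).symm⟩
  · rintro ⟨c₂, hc₂, rfl⟩
    obtain ⟨c₁, hc₁, hc⟩ := hback c₂ hc₂
    exact ⟨c₁, hc₁, hchild c₁ hc₁ c₂ hc⟩

theorem hash_eq (hR : IsBisim G₁ G₂ R) (hwf : WellFounded (fun c n => G₁.edge n c))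
    (H : L → Set Vh → Vh) {h₁ : V₁ → Vh} {h₂ : V₂ → Vh}
    (hrec₁ : ∀ n, h₁ n = H (G₁.label n) (h₁ '' {c | G₁.edge n c}))
    (hrec₂ : ∀ n, h₂ n = H (G₂.label n) (h₂ '' {c | G₂.edge n c})) :
    ∀ n₁ n₂, R n₁ n₂ → h₁ n₁ = h₂ n₂ := by
  intro n₁
  induction n₁ using hwf.induction with
  | _ n₁ ih =>
    intro n₂ hn
    rw [hrec₁, hrec₂, (hR n₁ n₂ hn).1, hR.image_children_eq hn ih]

end IsBisim

theorem bisimilar_imp_hash_eq_general {V L Vh : Type*}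
    (G : LGraph V L) (hacyc : WellFounded (fun c n => G.edge n c))
    (H : L → Set Vh → Vh) (h : V → Vh)
    (hrec : ∀ n, h n = H (G.label n) {v | ∃ c, G.edge n c ∧ h c = v}) :
    ∀ n₁ n₂, Bisimilar G G n₁ n₂ → h n₁ = h n₂ := by
  rintro n₁ n₂ ⟨R, hR, hn⟩
  exact hR.hash_eq hacyc H hrec hrec n₁ n₂ hn

/-- On a finite labeled DAG, if `h` assigns hash values by the recurrence
`h n = H (label n) {h c : c a child of n}` (as obtained by well-founded
recursion on the child relation), then bisimilar nodes receive the same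
hash value. -/
theorem bisimilar_imp_hash_eq {V L Vh : Type*} [Fintype V]
    (G : LGraph V L) (hacyc : WellFounded (fun c n => G.edge n c))
    (H : L → Set Vh → Vh) (h : V → Vh)
    (hrec : ∀ n, h n = H (G.label n) {v | ∃ c, G.edge n c ∧ h c = v}) :
    ∀ n₁ n₂, Bisimilar G G n₁ n₂ → h n₁ = h n₂ :=
  bisimilar_imp_hash_eq_general G hacyc H h hrec
end

section
/- Let G = ⟨N, E, l⟩ be a finite labeled directed graph and let G' = ⟨N', E', l'⟩ be any finite labeled directed graph that is bisimilar to G. Then the number of nodes of G' is at least the number of bisimilarity equivalence classes of G, i.e., |N'| ≥ |N↓| where N↓ is the node set of the quotient graph G↓ of G. Hence G↓ is a smallest graph bisimilar to G. -/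
/-- The quotient graph `G↓` of `G` by bisimilarity: nodes are the bisimilarity
equivalence classes, the label of a class is the common label of its members,
and there is an edge from class `C` to class `D` iff some node in `C` has a
child in `D`. -/
def quotGraph {V L : Type*} (G : LGraph V L) : LGraph (Quot (Bisimilar G G)) L where
  edge := fun C D => ∃ m n, Quot.mk (Bisimilar G G) m = C ∧
    Quot.mk (Bisimilar G G) n = D ∧ G.edge m n
  label := Quot.lift G.label (fun a b hab =>
    (hab.choose_spec.1 a b hab.choose_spec.2).1)

/-- The graphs `G₁` and `G₂` are bisimilar: every node of `G₁` is bisimilar to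
some node of `G₂` and vice versa. -/
def GraphBisimilar {V₁ V₂ L : Type*} (G₁ : LGraph V₁ L) (G₂ : LGraph V₂ L) : Prop :=
  (∀ n₁, ∃ n₂, Bisimilar G₁ G₂ n₁ n₂) ∧ (∀ n₂, ∃ n₁, Bisimilar G₁ G₂ n₁ n₂)

/-! Choosing for each node of `G'` a bisimilar node of `G` gives a map from `V'` onto the
bisimilarity classes of `G`: every node `n` of `G` is bisimilar to some `n'` of `G'`, and the node
chosen for `n'` is then bisimilar to `n` by symmetry and transitivity of bisimilarity. -/

theorem Bisimilar.symm {V₁ V₂ L : Type*} {G₁ : LGraph V₁ L} {G₂ : LGraph V₂ L}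
    {a : V₁} {b : V₂} (h : Bisimilar G₁ G₂ a b) : Bisimilar G₂ G₁ b a := by
  obtain ⟨R, hR, hab⟩ := h
  exact ⟨fun x y => R y x, fun n₂ n₁ hr =>
    ⟨(hR n₁ n₂ hr).1.symm, (hR n₁ n₂ hr).2.2, (hR n₁ n₂ hr).2.1⟩, hab⟩

theorem Bisimilar.trans {V₁ V₂ V₃ L : Type*} {G₁ : LGraph V₁ L} {G₂ : LGraph V₂ L}
    {G₃ : LGraph V₃ L} {a : V₁} {b : V₂} {c : V₃}
    (h₁ : Bisimilar G₁ G₂ a b) (h₂ : Bisimilar G₂ G₃ b c) : Bisimilar G₁ G₃ a c := by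
  obtain ⟨R, hR, hab⟩ := h₁
  obtain ⟨S, hS, hbc⟩ := h₂
  refine ⟨fun x z => ∃ y, R x y ∧ S y z, fun n₁ n₃ ⟨n₂, hr, hs⟩ => ?_, b, hab, hbc⟩
  obtain ⟨hl₁, hf₁, hb₁⟩ := hR n₁ n₂ hr
  obtain ⟨hl₂, hf₂, hb₂⟩ := hS n₂ n₃ hs
  refine ⟨hl₁.trans hl₂, fun c₁ hc₁ => ?_, fun c₃ hc₃ => ?_⟩
  · obtain ⟨c₂, he₂, hr'⟩ := hf₁ c₁ hc₁
    obtain ⟨c₃, he₃, hs'⟩ := hf₂ c₂ he₂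
    exact ⟨c₃, he₃, c₂, hr', hs'⟩
  · obtain ⟨c₂, he₂, hs'⟩ := hb₂ c₃ hc₃
    obtain ⟨c₁, he₁, hr'⟩ := hb₁ c₂ he₂
    exact ⟨c₁, he₁, c₂, hr', hs'⟩

theorem GraphBisimilar.exists_surjective_quot {V V' L : Type*} {G : LGraph V L}
    {G' : LGraph V' L} (h : GraphBisimilar G G') :
    ∃ f : V' → Quot (Bisimilar G G), Function.Surjective f := by
  choose back hback using h.2
  refine ⟨fun n' => Quot.mk _ (back n'), Quot.ind fun n => ?_⟩
  obtain ⟨n', hn'⟩ := h.1 n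
  exact ⟨n', Quot.sound ((hback n').trans hn'.symm)⟩

theorem card_ge_card_quot_general {V V' L : Type*} [Fintype V']
    (G : LGraph V L) (G' : LGraph V' L) (h : GraphBisimilar G G') :
    Nat.card (Quot (Bisimilar G G)) ≤ Nat.card V' := by
  obtain ⟨f, hf⟩ := h.exists_surjective_quot
  exact Nat.card_le_card_of_surjective f hf

/-- Any finite labeled directed graph `G'` that is bisimilar to `G` has at
least as many nodes as `G` has bisimilarity equivalence classes; hence the
quotient graph `G↓` is a smallest graph bisimilar to `G`. -/
theorem card_ge_card_quot {V V' L : Type*} [Fintype V] [Fintype V']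
    (G : LGraph V L) (G' : LGraph V' L) (h : GraphBisimilar G G') :
    Nat.card (Quot (Bisimilar G G)) ≤ Nat.card V' :=
  card_ge_card_quot_general G G' h
end

section
/- Let G be a finite rooted labeled tree with root r, and for a node n let L(r,n) denote the sequence of labels of the nodes on the directed path from r to n (including both endpoints). Then two nodes n and m of G are backward bisimilar if and only if L(r,n) = L(r,m). -/
/-- Backward `k`-bisimilarity `n ≈ᵏ m`, defined by recursion on `k`:
`n ≈⁰ m` iff the labels agree; `n ≈ᵏ⁺¹ m` iff `n ≈ᵏ m`, every parent of `n`
is backward `k`-bisimilar to some parent of `m`, and vice versa. -/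
def BackKBisim {V L : Type*} (G : LGraph V L) : ℕ → V → V → Prop
  | 0, n, m => G.label n = G.label m
  | k + 1, n, m =>
      BackKBisim G k n m ∧
      (∀ n', G.edge n' n → ∃ m', G.edge m' m ∧ BackKBisim G k n' m') ∧
      (∀ m', G.edge m' m → ∃ n', G.edge n' n ∧ BackKBisim G k n' m')

/-- `R` is a backward bisimulation on `G`: related nodes have the same label,
and every parent of one is related to some parent of the other. -/
def IsBackBisim {V L : Type*} (G : LGraph V L) (R : V → V → Prop) : Prop :=
  ∀ n₁ n₂, R n₁ n₂ →
    G.label n₁ = G.label n₂ ∧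
    (∀ p₁, G.edge p₁ n₁ → ∃ p₂, G.edge p₂ n₂ ∧ R p₁ p₂) ∧
    (∀ p₂, G.edge p₂ n₂ → ∃ p₁, G.edge p₁ n₁ ∧ R p₁ p₂)

/-- Nodes are backward bisimilar iff some backward bisimulation relates them. -/
def BackBisimilar {V L : Type*} (G : LGraph V L) (n₁ n₂ : V) : Prop :=
  ∃ R, IsBackBisim G R ∧ R n₁ n₂

/-- `p` is the sequence of nodes on a directed path from `r` to `n`
(including both endpoints). -/
def IsPathFromTo {V L : Type*} (G : LGraph V L) (r n : V) (p : List V) : Prop :=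
  p.head? = some r ∧ p.getLast? = some n ∧ List.Chain' G.edge p

namespace IsPathFromTo

variable {V L : Type*} {G : LGraph V L} {r n : V} {p : List V}

theorem ne_nil (h : IsPathFromTo G r n p) : p ≠ [] := by
  rintro rfl
  simp [IsPathFromTo] at h

theorem getLast?_map_label (h : IsPathFromTo G r n p) :
    (p.map G.label).getLast? = some (G.label n) := by
  rw [List.getLast?_map, h.2.1]
  rfl

theorem eq_singleton_or (h : IsPathFromTo G r n p) :
    (p = [r] ∧ n = r) ∨ ∃ q m, p = q ++ [n] ∧ IsPathFromTo G r m q ∧ G.edge m n := by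
  obtain ⟨hhead, hlast, hchain⟩ := h
  obtain rfl | ⟨q, x, rfl⟩ := p.eq_nil_or_concat
  · simp at hhead
  obtain rfl : n = x := by simpa using hlast.symm
  obtain rfl | ⟨q, m, rfl⟩ := q.eq_nil_or_concat
  · obtain rfl : r = n := by simpa using hhead.symm
    exact Or.inl ⟨rfl, rfl⟩
  · simp only [List.concat_eq_append] at hchain hhead ⊢
    obtain ⟨hq, -, hedge⟩ := List.isChain_append.1 hchain
    refine Or.inr ⟨q ++ [m], m, rfl, ⟨?_, by simp, hq⟩, hedge m (by simp) n (by simp)⟩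
    simpa [List.head?_append] using hhead

end IsPathFromTo

section RootedTree

variable {V L : Type*} {G : LGraph V L} {r n m : V} {p : List V}

theorem eq_root_of_forall_not_edge (hparent : ∀ n, n ≠ r → ∃! m, G.edge m n)
    (h : ∀ m, ¬ G.edge m n) : n = r := by
  by_contra hn
  obtain ⟨m, hm, -⟩ := hparent n hn
  exact h m hm

theorem IsPathFromTo.eq_singleton_of_root (hroot : ∀ m, ¬ G.edge m r)
    (h : IsPathFromTo G r r p) : p = [r] := by
  rcases h.eq_singleton_or with ⟨rfl, -⟩ | ⟨-, m, -, -, hm⟩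
  · rfl
  · exact absurd hm (hroot m)

theorem IsPathFromTo.eq_append_of_edge (hroot : ∀ m, ¬ G.edge m r)
    (hparent : ∀ n, n ≠ r → ∃! m, G.edge m n) (h : IsPathFromTo G r n p) (hmn : G.edge m n) :
    ∃ q, p = q ++ [n] ∧ IsPathFromTo G r m q := by
  rcases h.eq_singleton_or with ⟨-, rfl⟩ | ⟨q, m', rfl, hq, hm'⟩
  · exact absurd hmn (hroot m)
  · obtain rfl := (hparent n fun hn => hroot m (hn ▸ hmn)).unique hm' hmn
    exact ⟨q, rfl, hq⟩

theorem IsBackBisim.eq_root_of_rel_root {R : V → V → Prop} (hroot : ∀ m, ¬ G.edge m r)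
    (hparent : ∀ n, n ≠ r → ∃! m, G.edge m n) (hR : IsBackBisim G R) (h : R r m) : m = r :=
  eq_root_of_forall_not_edge hparent fun p hp => by
    obtain ⟨p', hp', -⟩ := (hR r m h).2.2 p hp
    exact hroot p' hp'

theorem IsBackBisim.map_label_eq {R : V → V → Prop} (hroot : ∀ m, ¬ G.edge m r)
    (hparent : ∀ n, n ≠ r → ∃! m, G.edge m n) (hR : IsBackBisim G R) {pn pm : List V}
    (hnm : R n m) (hpn : IsPathFromTo G r n pn) (hpm : IsPathFromTo G r m pm) :
    pn.map G.label = pm.map G.label := by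
  induction pn using List.reverseRecOn generalizing n m pm with
  | nil => exact absurd rfl hpn.ne_nil
  | append_singleton q x ih =>
    rcases hpn.eq_singleton_or with ⟨hq, rfl⟩ | ⟨q', n', hq, hq', hn'⟩
    · obtain rfl := hR.eq_root_of_rel_root hroot hparent hnm
      rw [hq, hpm.eq_singleton_of_root hroot]
    · obtain ⟨rfl, hx⟩ := List.append_inj' hq rfl
      obtain rfl : n = x := (List.singleton_inj.1 hx).symm
      obtain ⟨hlabel, hparents, -⟩ := hR n m hnm
      obtain ⟨m', hm', hnm'⟩ := hparents n' hn'
      obtain ⟨qm, rfl, hqm⟩ := hpm.eq_append_of_edge hroot hparent hm'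
      simp [ih hnm' hq' hqm, hlabel]

def RootLabelPathEq (G : LGraph V L) (r a b : V) : Prop :=
  ∃ pa pb, IsPathFromTo G r a pa ∧ IsPathFromTo G r b pb ∧ pa.map G.label = pb.map G.label

theorem RootLabelPathEq.symm {a b : V} (h : RootLabelPathEq G r a b) : RootLabelPathEq G r b a :=
  let ⟨pa, pb, ha, hb, hab⟩ := h
  ⟨pb, pa, hb, ha, hab.symm⟩

theorem RootLabelPathEq.label_eq {a b : V} (h : RootLabelPathEq G r a b) :
    G.label a = G.label b := by
  obtain ⟨pa, pb, ha, hb, hab⟩ := h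
  simpa [ha.getLast?_map_label, hb.getLast?_map_label] using congrArg List.getLast? hab

theorem RootLabelPathEq.exists_parent (hroot : ∀ m, ¬ G.edge m r)
    (hparent : ∀ n, n ≠ r → ∃! m, G.edge m n) {a b p : V} (h : RootLabelPathEq G r a b)
    (hp : G.edge p a) : ∃ p', G.edge p' b ∧ RootLabelPathEq G r p p' := by
  obtain ⟨pa, pb, ha, hb, hab⟩ := h
  obtain ⟨qa, rfl, hqa⟩ := ha.eq_append_of_edge hroot hparent hp
  rcases hb.eq_singleton_or with ⟨rfl, -⟩ | ⟨qb, p', rfl, hqb, hp'⟩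
  · have hqa_nil : qa = [] := by simpa using congrArg List.length hab
    exact absurd hqa_nil hqa.ne_nil
  · simp only [List.map_append, List.map_cons, List.map_nil] at hab
    exact ⟨p', hp', qa, qb, hqa, hqb, List.append_inj_left' hab rfl⟩

theorem isBackBisim_rootLabelPathEq (hroot : ∀ m, ¬ G.edge m r)
    (hparent : ∀ n, n ≠ r → ∃! m, G.edge m n) : IsBackBisim G (RootLabelPathEq G r) :=
  fun _ _ h =>
    ⟨h.label_eq, fun _ hp => h.exists_parent hroot hparent hp, fun _ hp => by
      obtain ⟨p', hp', h'⟩ := h.symm.exists_parent hroot hparent hp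
      exact ⟨p', hp', h'.symm⟩⟩

end RootedTree

theorem backBisimilar_iff_rootLabelPath_eq_general {V L : Type*}
    (G : LGraph V L) (r : V)
    (hroot : ∀ m, ¬ G.edge m r)
    (hparent : ∀ n, n ≠ r → ∃! m, G.edge m n)
    (n m : V)
    (pn pm : List V) (hpn : IsPathFromTo G r n pn) (hpm : IsPathFromTo G r m pm) :
    BackBisimilar G n m ↔ pn.map G.label = pm.map G.label := by
  constructor
  · rintro ⟨R, hR, hnm⟩
    exact hR.map_label_eq hroot hparent hnm hpn hpm
  · intro h
    exact ⟨_, isBackBisim_rootLabelPathEq hroot hparent, pn, pm, hpn, hpm, h⟩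

/-- In a finite rooted labeled tree, two nodes are backward bisimilar iff the
label sequences `L(r,·)` of the directed paths from the root to them agree. -/
theorem backBisimilar_iff_rootLabelPath_eq {V L : Type*} [Fintype V]
    (G : LGraph V L) (r : V)
    (hroot : ∀ m, ¬ G.edge m r)
    (hparent : ∀ n, n ≠ r → ∃! m, G.edge m n)
    (hreach : ∀ n, ∃ p, IsPathFromTo G r n p)
    (n m : V)
    (pn pm : List V) (hpn : IsPathFromTo G r n pn) (hpm : IsPathFromTo G r m pm) :
    BackBisimilar G n m ↔ pn.map G.label = pm.map G.label :=
  backBisimilar_iff_rootLabelPath_eq_general G r hroot hparent n m pn pm hpn hpm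
end

section
/- Let G = ⟨N, E, l⟩ be a finite rooted labeled tree with root r, let λ be a reserved label not in the range of l, and let m, n ∈ N and k ≥ 0. Then n ≈ᵏ m (n and m are backward k-bisimilar) if and only if T_n^{k+1} = T_m^{k+1} (their (k+1)-traces are equal). -/
/-- The `k`-trace of a label sequence `s`: the last `k` elements of `s`;
if `k` exceeds the length of `s`, the sequence `s` is prefixed with enough
copies of the reserved label `lam` to reach length `k`. -/
def ktrace {L : Type*} (lam : L) (s : List L) (k : ℕ) : List L :=
  if k ≤ s.length then s.drop (s.length - k)
  else List.replicate (k - s.length) lam ++ s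

/-!
In a tree every node other than the root has exactly one parent, so `n ≈ᵏ⁺¹ m` for non-root
nodes unfolds to `n ≈ᵏ m` together with `parent n ≈ᵏ parent m`, while the parentless root is
`(k+1)`-bisimilar to no other node. On the trace side, `T_n^{k+2}` is `T_{parent n}^{k+1}`
followed by `l n`, and the `(k+2)`-trace of the root is `λ^{k+1}` followed by `l r`, which no
other trace matches because `λ` is not a label. Induction on `k` matches the two recursions.
-/

section Trace

variable {L : Type*} (lam : L)

/-- Unlike the definition, this form needs no case split on `k ≤ s.length`. -/
lemma ktrace_eq_drop (s : List L) (k : ℕ) :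
    ktrace lam s k = (List.replicate k lam ++ s).drop s.length := by
  unfold ktrace
  split_ifs with h
  · simp [List.drop_append, List.drop_eq_nil_of_le, h]
  · simp [List.drop_append, Nat.sub_eq_zero_of_le (le_of_not_ge h)]

lemma ktrace_nil (k : ℕ) : ktrace lam [] k = List.replicate k lam := by
  simp [ktrace_eq_drop]

lemma ktrace_zero (s : List L) : ktrace lam s 0 = [] := by
  simp [ktrace_eq_drop]

lemma ktrace_append_singleton (s : List L) (a : L) (k : ℕ) :
    ktrace lam (s ++ [a]) (k + 1) = ktrace lam s k ++ [a] := by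
  simp [ktrace_eq_drop, List.replicate_succ, ← List.append_assoc, List.drop_append_of_le_length]

lemma ktrace_succ_tail (s : List L) (k : ℕ) :
    (ktrace lam s (k + 1)).tail = ktrace lam s k := by
  simp [ktrace_eq_drop, List.tail_drop, ← List.drop_tail, List.replicate_succ]

lemma ktrace_eq_of_succ {s t : List L} {k : ℕ}
    (h : ktrace lam s (k + 1) = ktrace lam t (k + 1)) : ktrace lam s k = ktrace lam t k := by
  rw [← ktrace_succ_tail, h, ktrace_succ_tail]

lemma ktrace_ne_replicate_of_lam_not_mem {s : List L} (hs : s ≠ []) (hlam : lam ∉ s) (k : ℕ) :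
    ktrace lam s (k + 1) ≠ List.replicate (k + 1) lam := by
  obtain ⟨t, a, rfl⟩ := (List.eq_nil_or_concat s).resolve_left hs
  rw [List.concat_eq_append, ktrace_append_singleton, List.replicate_succ', Ne,
    List.append_singleton_inj]
  rintro ⟨-, rfl⟩
  simp at hlam

lemma ktrace_singleton_ne_of_lam_not_mem {s : List L} (hs : s ≠ []) (hlam : lam ∉ s)
    (a b : L) (k : ℕ) : ktrace lam [a] (k + 2) ≠ ktrace lam (s ++ [b]) (k + 2) := by
  rw [← List.nil_append [a], ktrace_append_singleton, ktrace_append_singleton, ktrace_nil, Ne,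
    List.append_singleton_inj, not_and]
  exact fun h => absurd h.symm (ktrace_ne_replicate_of_lam_not_mem lam hs hlam k)

end Trace

section Graph

variable {V L : Type*} (G : LGraph V L)

lemma BackKBisim.refl (k : ℕ) (n : V) : BackKBisim G k n n := by
  induction k generalizing n with
  | zero => rfl
  | succ k ih => exact ⟨ih n, fun n' h => ⟨n', h, ih n'⟩, fun m' h => ⟨m', h, ih m'⟩⟩

variable {G}

lemma BackKBisim.symm {k : ℕ} {n m : V} (h : BackKBisim G k n m) : BackKBisim G k m n := by
  induction k generalizing n m with
  | zero => exact Eq.symm h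
  | succ k ih =>
    obtain ⟨h, hn, hm⟩ := h
    refine ⟨ih h, fun m' hm' => ?_, fun n' hn' => ?_⟩
    · obtain ⟨n', hn', h'⟩ := hm m' hm'
      exact ⟨n', hn', ih h'⟩
    · obtain ⟨m', hm', h'⟩ := hn n' hn'
      exact ⟨m', hm', ih h'⟩

lemma not_backKBisim_succ_of_parentless {n m m' : V} (hn : ∀ x, ¬ G.edge x n)
    (hm : G.edge m' m) (k : ℕ) : ¬ BackKBisim G (k + 1) n m := fun h => by
  obtain ⟨x, hx, -⟩ := h.2.2 m' hm
  exact hn x hx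

lemma backKBisim_succ_iff_of_unique_parent {n m n' m' : V} (hn : ∀ x, G.edge x n ↔ x = n')
    (hm : ∀ x, G.edge x m ↔ x = m') (k : ℕ) :
    BackKBisim G (k + 1) n m ↔ BackKBisim G k n m ∧ BackKBisim G k n' m' := by
  simp only [BackKBisim, hn, hm, forall_eq, exists_eq_left, and_self]

lemma IsPathFromTo.ne_nil_s16 {r n : V} {p : List V} (h : IsPathFromTo G r n p) : p ≠ [] := by
  rintro rfl
  simp [IsPathFromTo] at h

lemma IsPathFromTo.eq_singleton_or_append {r n : V} {p : List V} (hroot : ∀ x, ¬ G.edge x r)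
    (h : IsPathFromTo G r n p) :
    (n = r ∧ p = [r]) ∨ ∃ n' q, G.edge n' n ∧ IsPathFromTo G r n' q ∧ p = q ++ [n] := by
  obtain ⟨hhead, hlast, hchain⟩ := h
  obtain ⟨q, rfl⟩ := List.getLast?_eq_some_iff.mp hlast
  rcases List.eq_nil_or_concat q with rfl | ⟨q, n', rfl⟩
  · simp_all
  · rw [List.concat_eq_append] at hhead hchain ⊢
    rw [List.Chain', List.isChain_append] at hchain
    refine .inr ⟨n', q ++ [n'], hchain.2.2 n' (by simp) n (by simp),
      ⟨?_, by simp, hchain.1⟩, rfl⟩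
    rwa [List.head?_append_of_ne_nil _ (by simp)] at hhead

lemma edge_iff_eq_of_edge {r n n' : V}
    (hroot : ∀ x, ¬ G.edge x r) (hparent : ∀ n, n ≠ r → ∃! m, G.edge m n)
    (h : G.edge n' n) (x : V) : G.edge x n ↔ x = n' := by
  have hn : n ≠ r := by
    rintro rfl
    exact hroot n' h
  exact ⟨fun hx => (hparent n hn).unique hx h, fun hx => hx ▸ h⟩

end Graph

theorem backKBisim_iff_ktrace_eq_general {V L : Type*}
    (G : LGraph V L) (r : V)
    (hroot : ∀ m, ¬ G.edge m r)
    (hparent : ∀ n, n ≠ r → ∃! m, G.edge m n)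
    (lam : L) (hlam : ∀ v, G.label v ≠ lam)
    (m n : V) (k : ℕ)
    (pn pm : List V) (hpn : IsPathFromTo G r n pn) (hpm : IsPathFromTo G r m pm) :
    BackKBisim G k n m ↔
      ktrace lam (pn.map G.label) (k + 1) = ktrace lam (pm.map G.label) (k + 1) := by
  induction k generalizing n m pn pm with
  | zero =>
    obtain ⟨qn, rfl⟩ := List.getLast?_eq_some_iff.mp hpn.2.1
    obtain ⟨qm, rfl⟩ := List.getLast?_eq_some_iff.mp hpm.2.1
    simp only [BackKBisim, List.map_append, List.map_cons, List.map_nil,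
      ktrace_append_singleton, ktrace_zero, List.append_singleton_inj, true_and]
  | succ k ih =>
    have root_ne {v' v : V} {q : List V} (hq : IsPathFromTo G r v' q) :
        ktrace lam [G.label r] (k + 2) ≠ ktrace lam ((q ++ [v]).map G.label) (k + 2) := by
      rw [List.map_append, List.map_singleton]
      refine ktrace_singleton_ne_of_lam_not_mem lam ?_ ?_ _ _ k
      · simpa using hq.ne_nil_s16
      · simp [hlam]
    rcases hpn.eq_singleton_or_append hroot with ⟨rfl, rfl⟩ | ⟨n', qn, hn', hqn, rfl⟩ <;>
    rcases hpm.eq_singleton_or_append hroot with ⟨rfl, rfl⟩ | ⟨m', qm, hm', hqm, rfl⟩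
    · exact iff_of_true (BackKBisim.refl G _ _) rfl
    · exact iff_of_false (not_backKBisim_succ_of_parentless hroot hm' _) (root_ne hqm)
    · exact iff_of_false (fun h => not_backKBisim_succ_of_parentless hroot hn' _ h.symm)
        (fun h => root_ne hqn h.symm)
    · rw [backKBisim_succ_iff_of_unique_parent (edge_iff_eq_of_edge hroot hparent hn')
        (edge_iff_eq_of_edge hroot hparent hm'), ih _ _ _ _ hpn hpm, ih _ _ _ _ hqn hqm]
      simp only [List.map_append, List.map_cons, List.map_nil, ktrace_append_singleton,
        List.append_singleton_inj]
      exact ⟨fun ⟨⟨_, hl⟩, hq⟩ => ⟨hq, hl⟩,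
        fun ⟨hq, hl⟩ => ⟨⟨ktrace_eq_of_succ lam hq, hl⟩, hq⟩⟩

/-- In a finite rooted labeled tree with a reserved label `lam` not in the
range of the labeling, two nodes are backward `k`-bisimilar iff their
`(k+1)`-traces are equal. -/
theorem backKBisim_iff_ktrace_eq {V L : Type*} [Fintype V]
    (G : LGraph V L) (r : V)
    (hroot : ∀ m, ¬ G.edge m r)
    (hparent : ∀ n, n ≠ r → ∃! m, G.edge m n)
    (hreach : ∀ n, ∃ q, IsPathFromTo G r n q)
    (lam : L) (hlam : ∀ v, G.label v ≠ lam)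
    (m n : V) (k : ℕ)
    (pn pm : List V) (hpn : IsPathFromTo G r n pn) (hpm : IsPathFromTo G r m pm) :
    BackKBisim G k n m ↔
      ktrace lam (pn.map G.label) (k + 1) = ktrace lam (pm.map G.label) (k + 1) :=
  backKBisim_iff_ktrace_eq_general G r hroot hparent lam hlam m n k pn pm hpn hpm
end
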